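/- arXiv:2602.18362 — 9 statements merged into one kernel-verified Lean document; each statement's English description precedes it below -/
import Mathlib

section
/- Let G be a finite split graph. Then a set D of vertices of G is a maximal irredundant set of G if and only if D is a minimal dominating set of G. -/
open Set SimpleGraph

variable {V : Type*}

/-- The closed neighborhood `N[v]` of a vertex. -/
def closedNbr (G : SimpleGraph V) (v : V) : Set V := insert v (G.neighborSet v)

/-- Private neighbors of `x` with respect to `I`. -/
def privSet (G : SimpleGraph V) (x : V) (I : Set V) : Set V :=
  {y ∈ closedNbr G x | closedNbr G y ∩ I = {x}}

/-- A set is irredundant if every element has a private neighbor. -/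
def Irred (G : SimpleGraph V) (I : Set V) : Prop := ∀ x ∈ I, (privSet G x I).Nonempty

/-- A maximal irredundant set. -/
def MaxIrred (G : SimpleGraph V) (I : Set V) : Prop :=
  Irred G I ∧ ∀ J : Set V, Irred G J → I ⊆ J → J = I

def Redundant (G : SimpleGraph V) (R : Set V) : Prop := ¬ Irred G R

def MinRedundant (G : SimpleGraph V) (R : Set V) : Prop :=
  Redundant G R ∧ ∀ S : Set V, S ⊂ R → ¬ Redundant G S

/-- The set of redundant vertices of a set. -/
def redVerts (G : SimpleGraph V) (R : Set V) : Set V := {x ∈ R | privSet G x R = ∅}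

def Dominating (G : SimpleGraph V) (D : Set V) : Prop := ∀ v : V, ∃ d ∈ D, v ∈ closedNbr G d

def MinDominating (G : SimpleGraph V) (D : Set V) : Prop :=
  Dominating G D ∧ ∀ S : Set V, S ⊂ D → ¬ Dominating G S

/-- Vertices at distance at most 2 from `x`. -/
def ball2 (G : SimpleGraph V) (x : V) : Set V :=
  {y | y = x ∨ G.Adj x y ∨ ∃ w, G.Adj x w ∧ G.Adj w y}

/-- Vertices at distance exactly 2 from `x`. -/
def sphere2 (G : SimpleGraph V) (x : V) : Set V :=
  {y | y ≠ x ∧ ¬ G.Adj x y ∧ ∃ w, G.Adj x w ∧ G.Adj w y}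

/-- `G` contains no induced cycle of length `k`. -/
def CFree (G : SimpleGraph V) (k : ℕ) : Prop :=
  IsEmpty (SimpleGraph.cycleGraph k ↪g G)

/-- `S` dominates `B` through open neighborhoods. -/
def DomOver (G : SimpleGraph V) (S B : Set V) : Prop := ∀ b ∈ B, ∃ s ∈ S, G.Adj s b

def MinDomOver (G : SimpleGraph V) (S B : Set V) : Prop :=
  DomOver G S B ∧ ∀ S' : Set V, S' ⊂ S → ¬ DomOver G S' B

/-- `N(Y)`, the union of open neighborhoods of elements of `Y`. -/
def nbrUnion (G : SimpleGraph V) (Y : Set V) : Set V := ⋃ y ∈ Y, G.neighborSet y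

/-- Private edges of `x` with respect to `I` in a hypergraph. -/
def hypPriv (H : Set (Set V)) (x : V) (I : Set V) : Set (Set V) := {E ∈ H | E ∩ I = {x}}

def HypIrred (H : Set (Set V)) (I : Set V) : Prop := ∀ x ∈ I, (hypPriv H x I).Nonempty

def HypMaxIrred (H : Set (Set V)) (I : Set V) : Prop :=
  HypIrred H I ∧ ∀ J : Set V, HypIrred H J → I ⊆ J → J = I

/-- The trace of a hypergraph on a set `S`. -/
def htrace (H : Set (Set V)) (S : Set V) : Set (Set V) :=
  {F | ∃ E ∈ H, F = E ∩ S ∧ (E ∩ S).Nonempty}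

/-- The closed-neighborhood hypergraph of a graph. -/
def nbrHyp (G : SimpleGraph V) : Set (Set V) := Set.range (closedNbr G)

/-- The first `i` vertices in the ordering `v` (zero-based: `v 0, …, v (i-1)`). -/
def firstVerts (v : ℕ → V) (i : ℕ) : Set V := {x | ∃ j < i, v j = x}

/-- The incidence co-bipartite graph of the closed-neighborhood hypergraph of `G`:
`Sum.inl` is the vertex side `V`, `Sum.inr` is the copy `U`. -/
def cobip (G : SimpleGraph V) : SimpleGraph (V ⊕ V) :=
  SimpleGraph.fromRel (fun a b => match a, b with
    | Sum.inl _, Sum.inl _ => True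
    | Sum.inr _, Sum.inr _ => True
    | Sum.inl a, Sum.inr b => a = b ∨ G.Adj a b
    | Sum.inr _, Sum.inl _ => False)


lemma mem_closedNbr' {G : SimpleGraph V} {x y : V} :
    y ∈ closedNbr G x ↔ y = x ∨ G.Adj x y := by
  simp [closedNbr, SimpleGraph.mem_neighborSet]

lemma closedNbr_comm' {G : SimpleGraph V} {x y : V} :
    y ∈ closedNbr G x ↔ x ∈ closedNbr G y := by
  simp only [mem_closedNbr']
  constructor
  · rintro (rfl | h); exact Or.inl rfl; exact Or.inr h.symm
  · rintro (rfl | h); exact Or.inl rfl; exact Or.inr h.symm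

lemma self_mem_closedNbr' {G : SimpleGraph V} (x : V) : x ∈ closedNbr G x := by
  simp [mem_closedNbr']

lemma mem_privSet' {G : SimpleGraph V} {x y : V} {I : Set V} :
    y ∈ privSet G x I ↔ y ∈ closedNbr G x ∧ closedNbr G y ∩ I = {x} := Iff.rfl

/-- In a split graph, a maximal irredundant set is dominating. -/
lemma maxIrred_dominating (G : SimpleGraph V)
    (C S : Set V) (hunion : C ∪ S = Set.univ) (hdisj : C ∩ S = ∅)
    (hclique : G.IsClique C) (hindep : ∀ a ∈ S, ∀ b ∈ S, ¬ G.Adj a b)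
    {D : Set V} (hD : MaxIrred G D) : Dominating G D := by
  obtain ⟨hirr, hmax⟩ := hD
  intro u
  by_contra hu
  push_neg at hu
  -- hu : ∀ d ∈ D, u ∉ closedNbr G d
  have hCS : ∀ v : V, v ∈ C ∨ v ∈ S := by
    intro v
    have : v ∈ C ∪ S := hunion ▸ Set.mem_univ v
    exact this
  have hnotCS : ∀ v : V, v ∈ C → v ∈ S → False := by
    intro v hc hs
    have : v ∈ C ∩ S := ⟨hc, hs⟩
    rw [hdisj] at this
    exact this
  have huD : u ∉ D := fun h => hu u h (self_mem_closedNbr' u)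
  -- D ∪ {u} is not irredundant
  have hnotirr : ¬ Irred G (insert u D) := by
    intro hIJ
    have := hmax (insert u D) hIJ (Set.subset_insert u D)
    exact huD (this ▸ Set.mem_insert u D)
  -- u is its own private neighbor in insert u D
  have hupriv : u ∈ privSet G u (insert u D) := by
    rw [mem_privSet']
    refine ⟨self_mem_closedNbr' u, ?_⟩
    rw [Set.eq_singleton_iff_unique_mem]
    refine ⟨⟨self_mem_closedNbr' u, Set.mem_insert u D⟩, ?_⟩
    rintro z ⟨hz1, hz2⟩
    rcases hz2 with rfl | hzD
    · rfl
    · exact absurd (closedNbr_comm'.mp hz1) (hu z hzD)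
  -- get x ∈ D with empty private set wrt insert u D
  have : ∃ x ∈ D, ¬ (privSet G x (insert u D)).Nonempty := by
    unfold Irred at hnotirr
    push_neg at hnotirr
    obtain ⟨x, hx, hxe⟩ := hnotirr
    rcases hx with rfl | hxD
    · rw [hxe] at hupriv
      exact hupriv.elim
    · exact ⟨x, hxD, Set.not_nonempty_iff_eq_empty.mpr hxe⟩
  obtain ⟨x, hxD, hxe⟩ := this
  -- every D-private neighbor of x is adjacent to u
  have hadj : ∀ y ∈ privSet G x D, G.Adj y u := by
    intro y hy
    rw [mem_privSet'] at hy
    obtain ⟨hy1, hy2⟩ := hy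
    have hyu : u ∈ closedNbr G y := by
      by_contra hnu
      apply hxe
      refine ⟨y, mem_privSet'.mpr ⟨hy1, ?_⟩⟩
      rw [← hy2]
      ext z
      constructor
      · rintro ⟨h1, h2⟩
        rcases h2 with rfl | h2
        · exact absurd h1 hnu
        · exact ⟨h1, h2⟩
      · rintro ⟨h1, h2⟩; exact ⟨h1, Set.mem_insert_of_mem u h2⟩
    rcases mem_closedNbr'.mp hyu with rfl | h
    · exact absurd hy1 (hu x hxD)
    · exact h
  -- x is not its own private neighbor
  have hxnpriv : x ∉ privSet G x D := by
    intro h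
    exact hu x hxD (mem_closedNbr'.mpr (Or.inr (hadj x h)))
  obtain ⟨y, hy⟩ := hirr x hxD
  have hyu : G.Adj y u := hadj y hy
  have hyx : y ≠ x := fun h => hxnpriv (h ▸ hy)
  rw [mem_privSet'] at hy
  obtain ⟨hy1, hy2⟩ := hy
  -- helper: if D ⊆ S then x is its own private neighbor, contradiction
  have hDS : ¬ (∀ d ∈ D, d ∈ S) := by
    intro hDS
    apply hxnpriv
    rw [mem_privSet']
    refine ⟨self_mem_closedNbr' x, ?_⟩
    rw [Set.eq_singleton_iff_unique_mem]
    refine ⟨⟨self_mem_closedNbr' x, hxD⟩, ?_⟩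
    rintro z ⟨hz1, hz2⟩
    rcases mem_closedNbr'.mp hz1 with h | h
    · exact h
    · exact absurd h (hindep x (hDS x hxD) z (hDS z hz2))
  -- case u ∈ C is impossible
  have huS : u ∈ S := by
    rcases hCS u with huC | huS
    · exfalso
      apply hDS
      intro d hd
      rcases hCS d with hdC | hdS
      · exfalso
        have hdu : d ≠ u := fun h => huD (h ▸ hd)
        exact hu d hd (mem_closedNbr'.mpr (Or.inr (hclique hdC huC hdu)))
      · exact hdS
    · exact huS
  -- y ∈ C
  have hyC : y ∈ C := by
    rcases hCS y with h | h
    · exact h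
    · exact absurd hyu (hindep y h u huS)
  -- y ∉ D
  have hyD : y ∉ D := by
    intro h
    have : y ∈ closedNbr G y ∩ D := ⟨self_mem_closedNbr' y, h⟩
    rw [hy2] at this
    exact hyx this
  -- D ∩ C ⊆ {x}
  have hDC : ∀ c ∈ D, c ∈ C → c = x := by
    intro c hcD hcC
    have hcy : c ≠ y := fun h => hyD (h ▸ hcD)
    have : c ∈ closedNbr G y ∩ D :=
      ⟨closedNbr_comm'.mp (mem_closedNbr'.mpr (Or.inr (hclique hcC hyC hcy))), hcD⟩
    rw [hy2] at this
    exact this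
  -- x ∈ C
  have hxC : x ∈ C := by
    rcases hCS x with h | h
    · exact h
    · exfalso
      apply hDS
      intro d hd
      rcases hCS d with hdC | hdS
      · exact absurd h ((hDC d hd hdC) ▸ fun hs => hnotCS d hdC hs)
      · exact hdS
  -- there is d ∈ D, d ≠ x, adjacent to x
  have : ∃ d, d ∈ closedNbr G x ∩ D ∧ d ≠ x := by
    by_contra h
    push_neg at h
    apply hxnpriv
    rw [mem_privSet']
    refine ⟨self_mem_closedNbr' x, ?_⟩
    rw [Set.eq_singleton_iff_unique_mem]
    exact ⟨⟨self_mem_closedNbr' x, hxD⟩, h⟩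
  obtain ⟨d, ⟨hdN, hdD⟩, hdx⟩ := this
  have hdS : d ∈ S := by
    rcases hCS d with h | h
    · exact absurd (hDC d hdD h) hdx
    · exact h
  -- private neighbor of d
  obtain ⟨z, hz⟩ := hirr d hdD
  rw [mem_privSet'] at hz
  obtain ⟨hz1, hz2⟩ := hz
  have hzd : z ≠ d := by
    rintro rfl
    have : x ∈ closedNbr G z ∩ D := ⟨closedNbr_comm'.mp hdN, hxD⟩
    rw [hz2] at this
    exact hdx this.symm
  have hzC : z ∈ C := by
    rcases mem_closedNbr'.mp hz1 with h | h
    · exact absurd h hzd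
    · rcases hCS z with h' | h'
      · exact h'
      · exact absurd h.symm (hindep z h' d hdS)
  have hxz : x ∉ closedNbr G z := by
    intro h
    have : x ∈ closedNbr G z ∩ D := ⟨h, hxD⟩
    rw [hz2] at this
    exact hdx this.symm
  rcases eq_or_ne z x with rfl | hzx
  · exact hxz (self_mem_closedNbr' z)
  · exact hxz (mem_closedNbr'.mpr (Or.inr (hclique hzC hxC hzx)))

/-- In a finite split graph, a set is a maximal irredundant set
if and only if it is a minimal dominating set. -/
theorem stmt0 [Fintype V] (G : SimpleGraph V)
    (hsplit : ∃ C S : Set V, C ∪ S = Set.univ ∧ C ∩ S = ∅ ∧ G.IsClique C ∧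
      ∀ a ∈ S, ∀ b ∈ S, ¬ G.Adj a b)
    (D : Set V) :
    MaxIrred G D ↔ MinDominating G D := by
  obtain ⟨C, S, hunion, hdisj, hclique, hindep⟩ := hsplit
  constructor
  · rintro hMI
    obtain ⟨hirr, hmax⟩ := hMI
    have hdom : Dominating G D :=
      maxIrred_dominating G C S hunion hdisj hclique hindep ⟨hirr, hmax⟩
    refine ⟨hdom, ?_⟩
    rintro S' ⟨hS'sub, hS'ne⟩ hS'dom
    obtain ⟨x, hxD, hxS'⟩ := Set.not_subset.mp hS'ne
    obtain ⟨y, hy⟩ := hirr x hxD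
    rw [mem_privSet'] at hy
    obtain ⟨hy1, hy2⟩ := hy
    obtain ⟨s, hsS', hys⟩ := hS'dom y
    have : s ∈ closedNbr G y ∩ D := ⟨closedNbr_comm'.mp hys, hS'sub hsS'⟩
    rw [hy2] at this
    exact hxS' (this ▸ hsS')
  · rintro ⟨hdom, hmin⟩
    constructor
    · intro x hxD
      have hssub : D \ {x} ⊂ D := by
        constructor
        · exact Set.diff_subset
        · intro h
          exact (h hxD).2 rfl
      have := hmin (D \ {x}) hssub
      unfold Dominating at this
      push_neg at this
      obtain ⟨v, hv⟩ := this
      obtain ⟨d, hdD, hvd⟩ := hdom v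
      have hdx : d = x := by
        by_contra h
        exact hv d ⟨hdD, h⟩ hvd
      subst hdx
      refine ⟨v, mem_privSet'.mpr ⟨hvd, ?_⟩⟩
      rw [Set.eq_singleton_iff_unique_mem]
      refine ⟨⟨closedNbr_comm'.mp hvd, hxD⟩, ?_⟩
      rintro z ⟨hz1, hz2⟩
      by_contra h
      exact hv z ⟨hz2, h⟩ (closedNbr_comm'.mp hz1)
    · intro J hJ hDJ
      refine Set.Subset.antisymm ?_ hDJ
      intro x hxJ
      by_contra hxD
      obtain ⟨y, hy⟩ := hJ x hxJ
      rw [mem_privSet'] at hy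
      obtain ⟨hy1, hy2⟩ := hy
      obtain ⟨d, hdD, hyd⟩ := hdom y
      have : d ∈ closedNbr G y ∩ J := ⟨closedNbr_comm'.mp hyd, hDJ hdD⟩
      rw [hy2] at this
      exact hxD (this ▸ hdD)
end

section
/- Let G be a finite simple graph with vertex set V = {v_1, …, v_n}, and let C be its incidence co-bipartite graph of the closed-neighborhood hypergraph: the vertex set of C is the disjoint union of V and a copy U = {u_1, …, u_n} of V, both V and U induce cliques in C, and for all i, j, the vertices u_i and v_j are adjacent in C if and only if v_j ∈ N_G[v_i]. Then for every set I ⊆ V with |I| ≥ 3: (1) I is a maximal irredundant set of C if and only if I is a maximal irredundant set of G; and (2) the copy U(I) := {u_i | v_i ∈ I} is a maximal irredundant set of C if and only if I is a maximal irredundant set of G. -/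
open Set SimpleGraph

variable {V : Type*}

section AuxCobip

lemma cobip_adj_ll {G : SimpleGraph V} {a b : V} :
    (cobip G).Adj (Sum.inl a) (Sum.inl b) ↔ a ≠ b := by
  simp [cobip]

lemma cobip_adj_rr {G : SimpleGraph V} {a b : V} :
    (cobip G).Adj (Sum.inr a) (Sum.inr b) ↔ a ≠ b := by
  simp [cobip]

lemma cobip_adj_lr {G : SimpleGraph V} {a b : V} :
    (cobip G).Adj (Sum.inl a) (Sum.inr b) ↔ a = b ∨ G.Adj a b := by
  simp [cobip]

lemma cobip_adj_rl {G : SimpleGraph V} {a b : V} :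
    (cobip G).Adj (Sum.inr a) (Sum.inl b) ↔ b = a ∨ G.Adj b a := by
  simp [cobip]

lemma mem_closedNbr_cobip_ll {G : SimpleGraph V} (a b : V) :
    Sum.inl b ∈ closedNbr (cobip G) (Sum.inl a) := by
  rcases eq_or_ne b a with h | h
  · exact mem_closedNbr'.mpr (Or.inl (by rw [h]))
  · exact mem_closedNbr'.mpr (Or.inr (cobip_adj_ll.mpr h.symm))

lemma mem_closedNbr_cobip_rr {G : SimpleGraph V} (a b : V) :
    Sum.inr b ∈ closedNbr (cobip G) (Sum.inr a) := by
  rcases eq_or_ne b a with h | h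
  · exact mem_closedNbr'.mpr (Or.inl (by rw [h]))
  · exact mem_closedNbr'.mpr (Or.inr (cobip_adj_rr.mpr h.symm))

lemma mem_closedNbr_cobip_lr {G : SimpleGraph V} {a b : V} :
    Sum.inr b ∈ closedNbr (cobip G) (Sum.inl a) ↔ b ∈ closedNbr G a := by
  rw [mem_closedNbr', mem_closedNbr', cobip_adj_lr]
  simp [eq_comm]

lemma mem_closedNbr_cobip_rl {G : SimpleGraph V} {a b : V} :
    Sum.inl b ∈ closedNbr (cobip G) (Sum.inr a) ↔ b ∈ closedNbr G a := by
  rw [mem_closedNbr', mem_closedNbr', cobip_adj_rl]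
  simp [G.adj_comm]

lemma privSet_inl {G : SimpleGraph V} {A : Set V} {x : V}
    (hA : ∀ a : V, A ≠ {a}) :
    (privSet (cobip G) (Sum.inl x) (Sum.inl '' A)).Nonempty ↔ (privSet G x A).Nonempty := by
  constructor
  · rintro ⟨y, hy1, hy2⟩
    cases y with
    | inl z =>
      exfalso
      apply hA x
      have hsub : Sum.inl '' A ⊆ closedNbr (cobip G) (Sum.inl z) := by
        rintro _ ⟨a, _, rfl⟩; exact mem_closedNbr_cobip_ll z a
      have himg : (Sum.inl '' A : Set (V ⊕ V)) = {Sum.inl x} := by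
        rw [← Set.inter_eq_right.mpr hsub]; exact hy2
      ext a
      simp only [Set.mem_singleton_iff]
      constructor
      · intro ha
        have : Sum.inl a ∈ ({Sum.inl x} : Set (V ⊕ V)) := himg ▸ ⟨a, ha, rfl⟩
        exact Sum.inl_injective this
      · rintro rfl
        have : Sum.inl a ∈ (Sum.inl '' A : Set (V ⊕ V)) := by rw [himg]; rfl
        obtain ⟨b, hb, hbe⟩ := this
        exact (Sum.inl_injective hbe) ▸ hb
    | inr z =>
      have hz : z ∈ closedNbr G x := mem_closedNbr_cobip_lr.mp hy1
      refine ⟨z, hz, ?_⟩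
      ext a
      simp only [Set.mem_inter_iff, Set.mem_singleton_iff]
      constructor
      · rintro ⟨h1, h2⟩
        have : Sum.inl a ∈ closedNbr (cobip G) (Sum.inr z) ∩ (Sum.inl '' A) :=
          ⟨mem_closedNbr_cobip_rl.mpr h1, ⟨a, h2, rfl⟩⟩
        rw [hy2] at this
        exact Sum.inl_injective this
      · rintro rfl
        have : Sum.inl a ∈ closedNbr (cobip G) (Sum.inr z) ∩ (Sum.inl '' A) := by
          rw [hy2]; rfl
        obtain ⟨h1, hx2⟩ := this
        obtain ⟨b, hb, hbe⟩ := hx2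
        exact ⟨mem_closedNbr_cobip_rl.mp h1, (Sum.inl_injective hbe) ▸ hb⟩
  · rintro ⟨z, hz1, hz2⟩
    refine ⟨Sum.inr z, mem_closedNbr_cobip_lr.mpr hz1, ?_⟩
    ext w
    cases w with
    | inl a =>
      simp only [Set.mem_inter_iff, Set.mem_singleton_iff, Sum.inl.injEq]
      constructor
      · rintro ⟨h1, h2⟩
        obtain ⟨b, hb, hbe⟩ := h2
        have hbA : a ∈ A := (Sum.inl_injective hbe) ▸ hb
        have : a ∈ closedNbr G z ∩ A := ⟨mem_closedNbr_cobip_rl.mp h1, hbA⟩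
        rw [hz2] at this
        exact this
      · rintro rfl
        have : a ∈ closedNbr G z ∩ A := by rw [hz2]; rfl
        exact ⟨mem_closedNbr_cobip_rl.mpr this.1, ⟨a, this.2, rfl⟩⟩
    | inr b =>
      simp only [Set.mem_inter_iff, Set.mem_singleton_iff]
      constructor
      · rintro ⟨_, h2⟩
        obtain ⟨c, _, hce⟩ := h2
        exact absurd hce (by simp)
      · intro h; exact absurd h (by simp)

lemma privSet_inr {G : SimpleGraph V} {A : Set V} {x : V}
    (hA : ∀ a : V, A ≠ {a}) :
    (privSet (cobip G) (Sum.inr x) (Sum.inr '' A)).Nonempty ↔ (privSet G x A).Nonempty := by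
  constructor
  · rintro ⟨y, hy1, hy2⟩
    cases y with
    | inr z =>
      exfalso
      apply hA x
      have hsub : Sum.inr '' A ⊆ closedNbr (cobip G) (Sum.inr z) := by
        rintro _ ⟨a, _, rfl⟩; exact mem_closedNbr_cobip_rr z a
      have himg : (Sum.inr '' A : Set (V ⊕ V)) = {Sum.inr x} := by
        rw [← Set.inter_eq_right.mpr hsub]; exact hy2
      ext a
      simp only [Set.mem_singleton_iff]
      constructor
      · intro ha
        have : Sum.inr a ∈ ({Sum.inr x} : Set (V ⊕ V)) := himg ▸ ⟨a, ha, rfl⟩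
        exact Sum.inr_injective this
      · rintro rfl
        have : Sum.inr a ∈ (Sum.inr '' A : Set (V ⊕ V)) := by rw [himg]; rfl
        obtain ⟨b, hb, hbe⟩ := this
        exact (Sum.inr_injective hbe) ▸ hb
    | inl z =>
      have hz : z ∈ closedNbr G x := mem_closedNbr_cobip_rl.mp hy1
      refine ⟨z, hz, ?_⟩
      ext a
      simp only [Set.mem_inter_iff, Set.mem_singleton_iff]
      constructor
      · rintro ⟨h1, h2⟩
        have : Sum.inr a ∈ closedNbr (cobip G) (Sum.inl z) ∩ (Sum.inr '' A) :=
          ⟨mem_closedNbr_cobip_lr.mpr h1, ⟨a, h2, rfl⟩⟩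
        rw [hy2] at this
        exact Sum.inr_injective this
      · rintro rfl
        have : Sum.inr a ∈ closedNbr (cobip G) (Sum.inl z) ∩ (Sum.inr '' A) := by
          rw [hy2]; rfl
        obtain ⟨h1, hx2⟩ := this
        obtain ⟨b, hb, hbe⟩ := hx2
        exact ⟨mem_closedNbr_cobip_lr.mp h1, (Sum.inr_injective hbe) ▸ hb⟩
  · rintro ⟨z, hz1, hz2⟩
    refine ⟨Sum.inl z, mem_closedNbr_cobip_rl.mpr hz1, ?_⟩
    ext w
    cases w with
    | inr a =>
      simp only [Set.mem_inter_iff, Set.mem_singleton_iff, Sum.inr.injEq]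
      constructor
      · rintro ⟨h1, h2⟩
        obtain ⟨b, hb, hbe⟩ := h2
        have hbA : a ∈ A := (Sum.inr_injective hbe) ▸ hb
        have : a ∈ closedNbr G z ∩ A := ⟨mem_closedNbr_cobip_lr.mp h1, hbA⟩
        rw [hz2] at this
        exact this
      · rintro rfl
        have : a ∈ closedNbr G z ∩ A := by rw [hz2]; rfl
        exact ⟨mem_closedNbr_cobip_lr.mpr this.1, ⟨a, this.2, rfl⟩⟩
    | inl b =>
      simp only [Set.mem_inter_iff, Set.mem_singleton_iff]
      constructor
      · rintro ⟨_, h2⟩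
        obtain ⟨c, _, hce⟩ := h2
        exact absurd hce (by simp)
      · intro h; exact absurd h (by simp)

lemma irred_inl {G : SimpleGraph V} {A : Set V} (hA : ∀ a, A ≠ {a}) :
    Irred (cobip G) (Sum.inl '' A) ↔ Irred G A := by
  constructor
  · intro h x hx
    exact (privSet_inl hA).mp (h _ ⟨x, hx, rfl⟩)
  · rintro h _ ⟨x, hx, rfl⟩
    exact (privSet_inl hA).mpr (h x hx)

lemma irred_inr {G : SimpleGraph V} {A : Set V} (hA : ∀ a, A ≠ {a}) :
    Irred (cobip G) (Sum.inr '' A) ↔ Irred G A := by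
  constructor
  · intro h x hx
    exact (privSet_inr hA).mp (h _ ⟨x, hx, rfl⟩)
  · rintro h _ ⟨x, hx, rfl⟩
    exact (privSet_inr hA).mpr (h x hx)

lemma no_inr {G : SimpleGraph V} {J : Set (V ⊕ V)} {I : Set V}
    (hJ : Irred (cobip G) J) (hsub : Sum.inl '' I ⊆ J)
    {x x' : V} (hx : x ∈ I) (hx' : x' ∈ I) (hxx : x ≠ x') :
    ∀ b, Sum.inr b ∉ J := by
  intro b hb
  obtain ⟨y, hy1, hy2⟩ := hJ (Sum.inl x) (hsub ⟨x, hx, rfl⟩)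
  cases y with
  | inl z =>
    have h1 : Sum.inl x' ∈ closedNbr (cobip G) (Sum.inl z) ∩ J :=
      ⟨mem_closedNbr_cobip_ll _ _, hsub ⟨x', hx', rfl⟩⟩
    rw [hy2] at h1
    exact hxx (Sum.inl_injective h1).symm
  | inr z =>
    have h1 : Sum.inr b ∈ closedNbr (cobip G) (Sum.inr z) ∩ J :=
      ⟨mem_closedNbr_cobip_rr _ _, hb⟩
    rw [hy2] at h1
    exact absurd h1 (by simp)

lemma no_inl {G : SimpleGraph V} {J : Set (V ⊕ V)} {I : Set V}
    (hJ : Irred (cobip G) J) (hsub : Sum.inr '' I ⊆ J)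
    {x x' : V} (hx : x ∈ I) (hx' : x' ∈ I) (hxx : x ≠ x') :
    ∀ b, Sum.inl b ∉ J := by
  intro b hb
  obtain ⟨y, hy1, hy2⟩ := hJ (Sum.inr x) (hsub ⟨x, hx, rfl⟩)
  cases y with
  | inr z =>
    have h1 : Sum.inr x' ∈ closedNbr (cobip G) (Sum.inr z) ∩ J :=
      ⟨mem_closedNbr_cobip_rr _ _, hsub ⟨x', hx', rfl⟩⟩
    rw [hy2] at h1
    exact hxx (Sum.inr_injective h1).symm
  | inl z =>
    have h1 : Sum.inl b ∈ closedNbr (cobip G) (Sum.inl z) ∩ J :=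
      ⟨mem_closedNbr_cobip_ll _ _, hb⟩
    rw [hy2] at h1
    exact absurd h1 (by simp)

end AuxCobip

/-- For `I ⊆ V` with `|I| ≥ 3`, both the copy of `I` in the `V` side and the
copy of `I` in the `U` side of the incidence co-bipartite graph are maximal irredundant
sets of `C(N(G))` if and only if `I` is a maximal irredundant set of `G`. -/
theorem stmt1 [Fintype V] (G : SimpleGraph V) (I : Set V) (hI : 3 ≤ I.ncard) :
    (MaxIrred (cobip G) (Sum.inl '' I) ↔ MaxIrred G I) ∧
    (MaxIrred (cobip G) (Sum.inr '' I) ↔ MaxIrred G I) := by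
  have hne : ∀ {A : Set V}, I ⊆ A → ∀ a, A ≠ {a} := by
    intro A hIA a hAa
    have h1 : I.ncard ≤ ({a} : Set V).ncard :=
      Set.ncard_le_ncard (hAa ▸ hIA) (Set.finite_singleton a)
    rw [Set.ncard_singleton] at h1
    omega
  obtain ⟨x, hx, x', hx', hxx⟩ : ∃ x ∈ I, ∃ x' ∈ I, x ≠ x' := by
    rw [← Set.one_lt_ncard (Set.toFinite I)]
    omega
  constructor
  · constructor
    · rintro ⟨hirr, hmax⟩
      refine ⟨(irred_inl (hne Set.Subset.rfl)).mp hirr, ?_⟩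
      intro J hJ hIJ
      have h := hmax (Sum.inl '' J) ((irred_inl (hne hIJ)).mpr hJ) (Set.image_mono hIJ)
      exact Set.image_injective.mpr Sum.inl_injective h
    · rintro ⟨hirr, hmax⟩
      refine ⟨(irred_inl (hne Set.Subset.rfl)).mpr hirr, ?_⟩
      intro J hJ hIJ
      have hnoB := no_inr hJ hIJ hx hx' hxx
      have hJA : J = Sum.inl '' (Sum.inl ⁻¹' J) := by
        ext w
        cases w with
        | inl a => simp
        | inr b => simp [hnoB b]
      have hIA : I ⊆ Sum.inl ⁻¹' J := fun a ha => hIJ ⟨a, ha, rfl⟩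
      have hA : Sum.inl ⁻¹' J = I :=
        hmax _ ((irred_inl (hne hIA)).mp (hJA ▸ hJ)) hIA
      rw [hJA, hA]
  · constructor
    · rintro ⟨hirr, hmax⟩
      refine ⟨(irred_inr (hne Set.Subset.rfl)).mp hirr, ?_⟩
      intro J hJ hIJ
      have h := hmax (Sum.inr '' J) ((irred_inr (hne hIJ)).mpr hJ) (Set.image_mono hIJ)
      exact Set.image_injective.mpr Sum.inr_injective h
    · rintro ⟨hirr, hmax⟩
      refine ⟨(irred_inr (hne Set.Subset.rfl)).mpr hirr, ?_⟩
      intro J hJ hIJ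
      have hnoB := no_inl hJ hIJ hx hx' hxx
      have hJA : J = Sum.inr '' (Sum.inr ⁻¹' J) := by
        ext w
        cases w with
        | inr a => simp
        | inl b => simp [hnoB b]
      have hIA : I ⊆ Sum.inr ⁻¹' J := fun a ha => hIJ ⟨a, ha, rfl⟩
      have hA : Sum.inr ⁻¹' J = I :=
        hmax _ ((irred_inr (hne hIA)).mp (hJA ▸ hJ)) hIA
      rw [hJA, hA]
end

section
/- Let G be a finite simple graph with vertex ordering v_1, …, v_n, let V_i := {v_1, …, v_i}, let H be the closed-neighborhood hypergraph of G, and let H_i denote the trace of H on V_i. Then for every i ∈ {1, …, n−1} and every maximal irredundant set I* of H_i, either I* is a maximal irredundant set of H_{i+1}, or I* ∪ {v_{i+1}} is a maximal irredundant set of H_{i+1}. -/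
open Set SimpleGraph

variable {V : Type*}

lemma hypIrred_subset {H : Set (Set V)} {I J : Set V} (hIJ : I ⊆ J) (hJ : HypIrred H J) :
    HypIrred H I := by
  intro x hx
  obtain ⟨E, hEH, hE⟩ := hJ x (hIJ hx)
  refine ⟨E, hEH, Set.Subset.antisymm ?_ ?_⟩
  · intro y hy; rw [← hE]; exact ⟨hy.1, hIJ hy.2⟩
  · intro y hy
    rw [Set.mem_singleton_iff] at hy; subst hy
    have hxE : y ∈ E ∩ J := by rw [hE]; exact Set.mem_singleton y
    exact ⟨hxE.1, hx⟩

lemma hypIrred_trace_iff {H : Set (Set V)} {S I : Set V} (hIS : I ⊆ S) :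
    HypIrred (htrace H S) I ↔ HypIrred H I := by
  have key : ∀ E : Set V, E ∩ S ∩ I = E ∩ I := by
    intro E; rw [Set.inter_assoc, Set.inter_eq_right.mpr hIS]
  constructor
  · intro h x hx
    obtain ⟨F, ⟨E, hEH, rfl, hne⟩, hF⟩ := h x hx
    exact ⟨E, hEH, (key E) ▸ hF⟩
  · intro h x hx
    obtain ⟨E, hEH, hE⟩ := h x hx
    have hxE : x ∈ E ∩ I := by rw [hE]; exact Set.mem_singleton x
    exact ⟨E ∩ S, ⟨E, hEH, rfl, ⟨x, hxE.1, hIS hx⟩⟩, by rw [key E]; exact hE⟩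

lemma hypIrred_trace_mem {H : Set (Set V)} {S I : Set V} (h : HypIrred (htrace H S) I)
    {x : V} (hx : x ∈ I) : x ∈ S := by
  obtain ⟨F, ⟨E, hEH, rfl, hne⟩, hF⟩ := h x hx
  have : x ∈ E ∩ S ∩ I := by rw [hF]; exact Set.mem_singleton x
  exact this.1.2

/-- if `I⋆` is a maximal irredundant set of the trace `H_i` (`1 ≤ i ≤ n-1`),
then either `I⋆` or `I⋆ ∪ {v_{i+1}}` is a maximal irredundant set of `H_{i+1}`.
(Here `v j` is the `(j+1)`-st vertex, so `v_{i+1}` is `v i`.) -/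
theorem stmt3 [Fintype V] (G : SimpleGraph V) (n : ℕ) (hn : n = Fintype.card V)
    (v : ℕ → V)
    (hinj : ∀ j k, j < n → k < n → v j = v k → j = k)
    (hsurj : ∀ x : V, ∃ j < n, v j = x)
    (i : ℕ) (h1 : 1 ≤ i) (hin : i ≤ n - 1) (Istar : Set V)
    (hI : HypMaxIrred (htrace (nbrHyp G) (firstVerts v i)) Istar) :
    HypMaxIrred (htrace (nbrHyp G) (firstVerts v (i + 1))) Istar ∨
    HypMaxIrred (htrace (nbrHyp G) (firstVerts v (i + 1))) (Istar ∪ {v i}) := by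
  have hST : firstVerts v i ⊆ firstVerts v (i + 1) := by
    rintro x ⟨j, hj, rfl⟩; exact ⟨j, Nat.lt_succ_of_lt hj, rfl⟩
  have hTmem : ∀ x ∈ firstVerts v (i + 1), x = v i ∨ x ∈ firstVerts v i := by
    rintro x ⟨j, hj, rfl⟩
    rcases Nat.lt_succ_iff_lt_or_eq.mp hj with h | rfl
    · exact Or.inr ⟨j, h, rfl⟩
    · exact Or.inl rfl
  have hIsub : Istar ⊆ firstVerts v i := fun x hx => hypIrred_trace_mem hI.1 hx
  have hIH : HypIrred (nbrHyp G) Istar := (hypIrred_trace_iff hIsub).mp hI.1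
  have hIT : HypIrred (htrace (nbrHyp G) (firstVerts v (i + 1))) Istar :=
    (hypIrred_trace_iff (hIsub.trans hST)).mpr hIH
  have key : ∀ K, HypIrred (htrace (nbrHyp G) (firstVerts v (i + 1))) K → Istar ⊆ K →
      ∀ y ∈ K, y ∉ Istar → y = v i := by
    intro K hK hIK y hyK hyI
    by_contra hne
    have hyT : y ∈ firstVerts v (i + 1) := hypIrred_trace_mem hK hyK
    have hyS : y ∈ firstVerts v i := (hTmem y hyT).resolve_left hne
    have hsub : Istar ∪ {y} ⊆ K := Set.union_subset hIK (by simpa using hyK)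
    have h1' : HypIrred (htrace (nbrHyp G) (firstVerts v (i + 1))) (Istar ∪ {y}) :=
      hypIrred_subset hsub hK
    have hsubS : Istar ∪ {y} ⊆ firstVerts v i :=
      Set.union_subset hIsub (by simpa using hyS)
    have h2' : HypIrred (htrace (nbrHyp G) (firstVerts v i)) (Istar ∪ {y}) :=
      (hypIrred_trace_iff hsubS).mpr ((hypIrred_trace_iff (hsubS.trans hST)).mp h1')
    have := hI.2 (Istar ∪ {y}) h2' Set.subset_union_left
    apply hyI
    rw [← this]
    exact Or.inr (Set.mem_singleton y)
  by_cases hmax : ∀ J, HypIrred (htrace (nbrHyp G) (firstVerts v (i + 1))) J → Istar ⊆ J →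
      J = Istar
  · exact Or.inl ⟨hIT, hmax⟩
  · push_neg at hmax
    obtain ⟨J, hJirr, hIJ, hJne⟩ := hmax
    have hwJ : v i ∈ J := by
      by_contra hw
      apply hJne
      refine Set.Subset.antisymm ?_ hIJ
      intro y hy
      by_contra hyI
      exact hw ((key J hJirr hIJ y hy hyI) ▸ hy)
    have hIWsub : Istar ∪ {v i} ⊆ J := Set.union_subset hIJ (by simpa using hwJ)
    refine Or.inr ⟨hypIrred_subset hIWsub hJirr, ?_⟩
    intro K hK hIK
    refine Set.Subset.antisymm ?_ hIK
    intro y hy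
    by_cases hyI : y ∈ Istar
    · exact Or.inl hyI
    · exact Or.inr (key K hK (Set.subset_union_left.trans hIK) y hy hyI)
end

section
/- Let G be a finite simple graph and R a minimal redundant set of G. Then for any two distinct vertices x, y ∈ R such that x ∈ red(R), there exists a vertex z with z ∈ priv(x, R \ {y}) and z ∈ priv(y, R \ {x}). -/
open Set SimpleGraph

variable {V : Type*}

/-- in a minimal redundant set `R`, for distinct `x, y ∈ R` with `x`
redundant, some vertex `z` is a private neighbor of `x` w.r.t. `R \ {y}` and a private
neighbor of `y` w.r.t. `R \ {x}`. -/
theorem stmt4 [Fintype V] (G : SimpleGraph V) (R : Set V) (hR : MinRedundant G R)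
    (x y : V) (hx : x ∈ R) (hy : y ∈ R) (hxy : x ≠ y) (hxred : x ∈ redVerts G R) :
    ∃ z : V, z ∈ privSet G x (R \ {y}) ∧ z ∈ privSet G y (R \ {x}) := by
  -- R \ {y} is a proper subset of R, hence irredundant
  have hsub : R \ {y} ⊂ R := Set.sdiff_singleton_ssubset.mpr hy
  have hirr : Irred G (R \ {y}) := not_not.mp (hR.2 _ hsub)
  have hxmem : x ∈ R \ {y} := ⟨hx, hxy⟩
  obtain ⟨z, hz1, hz2⟩ := hirr x hxmem
  -- since priv(x, R) = ∅, z is not a private neighbor of x w.r.t. R, so y ∈ N[z]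
  have hznot : z ∉ privSet G x R := by
    have := hxred.2
    intro h; rw [this] at h; exact h
  have hyz : y ∈ closedNbr G z := by
    by_contra hyc
    apply hznot
    refine ⟨hz1, ?_⟩
    rw [← hz2]
    ext w
    constructor
    · rintro ⟨hw1, hw2⟩
      refine ⟨hw1, hw2, ?_⟩
      rintro rfl; exact hyc hw1
    · rintro ⟨hw1, hw2, _⟩; exact ⟨hw1, hw2⟩
  -- symmetry of closed neighborhoods
  have hzy : z ∈ closedNbr G y := by
    rcases hyz with h | h
    · exact Or.inl h.symm
    · exact Or.inr h.symm
  refine ⟨z, ⟨hz1, hz2⟩, hzy, ?_⟩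
  ext w
  constructor
  · rintro ⟨hw1, hw2, hwx⟩
    by_contra hwy
    have : w ∈ closedNbr G z ∩ (R \ {y}) := ⟨hw1, hw2, hwy⟩
    rw [hz2] at this
    exact hwx this
  · rintro rfl
    exact ⟨hyz, hy, Ne.symm hxy⟩
end

section
/- Let G be a finite simple graph and R a minimal redundant set of G. Then R ⊆ N²[x] for every x ∈ red(R), where N²[x] is the set of vertices at graph distance at most 2 from x. -/
open Set SimpleGraph

variable {V : Type*}

/-- a minimal redundant set is contained in the ball of radius 2 around
any of its redundant vertices. -/
theorem stmt5 [Fintype V] (G : SimpleGraph V) (R : Set V) (hR : MinRedundant G R)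
    (x : V) (hx : x ∈ redVerts G R) :
    R ⊆ ball2 G x := by
  intro y hy
  by_contra hyb
  obtain ⟨hxR, hpriv⟩ := hx
  have hxy : x ≠ y := by rintro rfl; exact hyb (Or.inl rfl)
  have hsub : R \ {y} ⊂ R :=
    Set.sdiff_singleton_ssubset.mpr hy
  have hred : Redundant G (R \ {y}) := by
    intro hirr
    obtain ⟨z, hz1, hz2⟩ := hirr x ⟨hxR, hxy⟩
    have hne : closedNbr G z ∩ R ≠ {x} := by
      intro h
      have : z ∈ privSet G x R := ⟨hz1, h⟩
      rw [hpriv] at this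
      exact this
    have hxz : x ∈ closedNbr G z := by
      rcases hz1 with h | h
      · exact Or.inl h.symm
      · exact Or.inr h.symm
    obtain ⟨w, hw, hwx⟩ : ∃ w ∈ closedNbr G z ∩ R, w ≠ x := by
      by_contra h
      push_neg at h
      exact hne (Set.Subset.antisymm (fun a ha => h a ha)
        (Set.singleton_subset_iff.mpr ⟨hxz, hxR⟩))
    have hwy : w ≠ y := by
      rintro rfl
      apply hyb
      rcases hz1 with hz | hz <;> rcases hw.1 with hw1 | hw1
      · exact Or.inl (hw1.trans hz)
      · subst hz; exact Or.inr (Or.inl hw1)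
      · subst hw1; exact Or.inr (Or.inl hz)
      · exact Or.inr (Or.inr ⟨z, hz, hw1⟩)
    have : w ∈ ({x} : Set V) := by
      rw [← hz2]; exact ⟨hw.1, hw.2, hwy⟩
    exact hwx this
  exact hR.2 _ hsub hred
end

section
/- Let G be a finite simple graph that is C_3-free and C_5-free. Then for every vertex x of G, the subgraph of G induced by N²[x] (the set of vertices at distance at most 2 from x) is bipartite, i.e., 2-colorable. -/
open Set SimpleGraph

variable {V : Type*}

/-!
Colour a vertex of `N²[x]` by whether it is adjacent to `x`. An edge between two neighbours of `x`
closes a triangle with `x`. An edge `u v` between two vertices at distance 2, reached through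
neighbours `p` and `q` of `x`, closes a triangle if `p = q` and otherwise the closed walk
`x p u v q`, which is an induced `C₅` once the triangle-freeness excludes all of its chords.
-/

namespace CFree

variable {G : SimpleGraph V}

lemma not_adj_of_adj_of_adj (h3 : CFree G 3) {a b c : V} (hab : G.Adj a b) (hbc : G.Adj b c) :
    ¬ G.Adj a c := by
  intro hac
  refine h3.false ⟨⟨![a, b, c], ?_⟩, ?_⟩
  · intro i j hij
    fin_cases i <;> fin_cases j <;> simp_all [G.ne_of_adj hab, G.ne_of_adj hbc, G.ne_of_adj hac]
  · intro i j
    show G.Adj (![a, b, c] i) (![a, b, c] j) ↔ _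
    fin_cases i <;> fin_cases j <;> simp [cycleGraph_adj, hab, hbc, hac, hab.symm, hbc.symm,
      hac.symm] <;> decide

lemma false_of_chordless_five_cycle (h5 : CFree G 5) {a b c d e : V}
    (hab : G.Adj a b) (hbc : G.Adj b c) (hcd : G.Adj c d) (hde : G.Adj d e) (hea : G.Adj e a)
    (hac : ¬ G.Adj a c) (had : ¬ G.Adj a d) (hbd : ¬ G.Adj b d) (hbe : ¬ G.Adj b e)
    (hce : ¬ G.Adj c e) : False := by
  have hac' : a ≠ c := fun h => had (h ▸ hcd)
  have had' : a ≠ d := fun h => hac (h ▸ hcd.symm)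
  have hbd' : b ≠ d := fun h => hbe (h ▸ hde)
  have hbe' : b ≠ e := fun h => hbd (h ▸ hde.symm)
  have hce' : c ≠ e := fun h => hbe (h ▸ hbc)
  refine h5.false ⟨⟨![a, b, c, d, e], ?_⟩, ?_⟩
  · intro i j hij
    fin_cases i <;> fin_cases j <;>
      simp_all [G.ne_of_adj hab, G.ne_of_adj hbc, G.ne_of_adj hcd, G.ne_of_adj hde,
        G.ne_of_adj hea, Ne.symm]
  · intro i j
    show G.Adj (![a, b, c, d, e] i) (![a, b, c, d, e] j) ↔ _
    fin_cases i <;> fin_cases j <;>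
      simp [cycleGraph_adj, hab, hbc, hcd, hde, hea, hab.symm, hbc.symm, hcd.symm, hde.symm,
        hea.symm, hac, had, hbd, hbe, hce, G.adj_comm c a, G.adj_comm d a,
        G.adj_comm d b, G.adj_comm e b, G.adj_comm e c] <;> decide

lemma not_adj_of_mem_sphere2 (h3 : CFree G 3) (h5 : CFree G 5) {x u v : V}
    (hu : u ∈ sphere2 G x) (hv : v ∈ sphere2 G x) : ¬ G.Adj u v := by
  obtain ⟨-, hxu, p, hxp, hpu⟩ := hu
  obtain ⟨-, hxv, q, hxq, hqv⟩ := hv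
  intro huv
  by_cases hpq : p = q
  · subst hpq
    exact h3.not_adj_of_adj_of_adj hpu huv hqv
  · exact h5.false_of_chordless_five_cycle hxp hpu huv hqv.symm hxq.symm hxu hxv
      (h3.not_adj_of_adj_of_adj hpu huv) (fun hpq' => h3.not_adj_of_adj_of_adj hxp hpq' hxq)
      (h3.not_adj_of_adj_of_adj huv hqv.symm)

end CFree

lemma mem_sphere2_of_mem_ball2 {G : SimpleGraph V} {x u : V} (hu : u ∈ ball2 G x) (hux : u ≠ x)
    (hxu : ¬ G.Adj x u) : u ∈ sphere2 G x := by
  obtain hux' | hxu' | hw := hu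
  · exact absurd hux' hux
  · exact absurd hxu' hxu
  · exact ⟨hux, hxu, hw⟩

theorem stmt6_general (G : SimpleGraph V) (h3 : CFree G 3) (h5 : CFree G 5)
    (x : V) :
    (G.induce (ball2 G x)).Colorable 2 := by
  classical
  refine (Coloring.mk (fun v : ball2 G x => decide (G.Adj x v)) ?_).colorable
  rintro ⟨u, hu⟩ ⟨v, hv⟩ (huv : G.Adj u v)
  by_cases hxu : G.Adj x u <;> by_cases hxv : G.Adj x v
  · exact absurd hxv (h3.not_adj_of_adj_of_adj hxu huv)
  · simp [hxu, hxv]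
  · simp [hxu, hxv]
  · have hux : u ≠ x := fun h => hxv (h ▸ huv)
    have hvx : v ≠ x := fun h => hxu (h ▸ huv.symm)
    exact absurd huv (h3.not_adj_of_mem_sphere2 h5 (mem_sphere2_of_mem_ball2 hu hux hxu)
      (mem_sphere2_of_mem_ball2 hv hvx hxv))

/-- in a `(C₃, C₅)`-free graph, the subgraph induced by the ball of radius 2
around any vertex is bipartite (2-colorable). -/
theorem stmt6 [Fintype V] (G : SimpleGraph V) (h3 : CFree G 3) (h5 : CFree G 5)
    (x : V) :
    (G.induce (ball2 G x)).Colorable 2 :=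
  stmt6_general G h3 h5 x
end

section
/- Let G be a finite simple graph that is C_3-free, C_5-free and C_6-free, let R be a minimal redundant set of G, let x ∈ red(R), and let z_1, z_2 be two distinct vertices in R ∩ N²(x), where N²(x) is the set of vertices at distance exactly 2 from x. Then (N(z_1) ∩ N(z_2)) \ N(x) = ∅. -/
open Set SimpleGraph

variable {V : Type*}

/-!
For each `zᵢ`, minimality of `R` makes `R \ {zᵢ}` irredundant, so `x` has a private neighbour
`pᵢ` with respect to `R \ {zᵢ}`; as `x` has none with respect to `R`, the closed neighbourhood of
`pᵢ` meets `R` exactly in `{x, zᵢ}`, and `pᵢ` is a common neighbour of `x` and `zᵢ`. A common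
neighbour `w` of `z₁` and `z₂` outside `N(x)` would then close `x p₁ z₁ w z₂ p₂` into a
6-cycle; the distance conditions, the choice of the `pᵢ` and triangle-freeness rule out every
chord, contradicting `C₆`-freeness.
-/

def SimpleGraph.Embedding.ofAdjIff {W : Type*} {H : SimpleGraph W} {G : SimpleGraph V}
    (hH : ∀ i j, (∀ k, H.Adj i k ↔ H.Adj j k) → i = j) (f : W → V)
    (hf : ∀ i j, G.Adj (f i) (f j) ↔ H.Adj i j) : H ↪g G where
  toFun := f
  inj' i j hij := hH i j fun k => by simp only [← hf, hij]
  map_rel_iff' := hf _ _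

namespace CFree

variable {G : SimpleGraph V}

lemma false_of_hexagon (h6 : CFree G 6) {a b c d e f : V}
    (hab : G.Adj a b) (hbc : G.Adj b c) (hcd : G.Adj c d) (hde : G.Adj d e)
    (hef : G.Adj e f) (hfa : G.Adj f a)
    (nac : ¬ G.Adj a c) (nad : ¬ G.Adj a d) (nae : ¬ G.Adj a e)
    (nbd : ¬ G.Adj b d) (nbe : ¬ G.Adj b e) (nbf : ¬ G.Adj b f)
    (nce : ¬ G.Adj c e) (ncf : ¬ G.Adj c f) (ndf : ¬ G.Adj d f) : False :=
  h6.false <| .ofAdjIff (by decide) ![a, b, c, d, e, f] fun i j => by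
    fin_cases i <;> fin_cases j <;>
      simp [cycleGraph_adj, G.adj_comm, hfa.symm, *] <;> decide

end CFree

namespace MinRedundant

variable {G : SimpleGraph V} {R : Set V} {x y : V}

lemma exists_closedNbr_inter_eq_pair (hR : MinRedundant G R) (hx : x ∈ redVerts G R)
    (hy : y ∈ R) (hxy : x ≠ y) : ∃ p ∈ closedNbr G x, closedNbr G p ∩ R = {x, y} := by
  obtain ⟨p, hpx, hp⟩ :=
    not_not.mp (hR.2 _ (sdiff_singleton_ssubset.mpr hy)) x ⟨hx.1, hxy⟩
  refine ⟨p, hpx, ?_⟩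
  rw [← inter_sdiff_assoc] at hp
  have hyp : y ∈ closedNbr G p ∩ R := by
    by_contra hyp
    have hpriv : p ∈ privSet G x R := ⟨hpx, by rwa [sdiff_singleton_eq_self hyp] at hp⟩
    simp [hx.2] at hpriv
  rw [← insert_sdiff_self_of_mem hyp, hp, pair_comm]

lemma exists_adj_adj_of_mem_sphere2 (hR : MinRedundant G R) (hx : x ∈ redVerts G R) (hy : y ∈ R)
    (hy2 : y ∈ sphere2 G x) : ∃ p, G.Adj x p ∧ G.Adj p y ∧ closedNbr G p ∩ R = {x, y} := by
  obtain ⟨hyx, hxy, -⟩ := hy2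
  obtain ⟨p, hpx, hp⟩ := hR.exists_closedNbr_inter_eq_pair hx hy hyx.symm
  have hyp : y ∈ closedNbr G p := (hp.symm ▸ Or.inr rfl : y ∈ closedNbr G p ∩ R).1
  obtain rfl | hxp := hpx
  · obtain rfl | hpy := hyp <;> contradiction
  · obtain rfl | hpy := hyp
    · contradiction
    · exact ⟨p, hxp, hpy, hp⟩

end MinRedundant

lemma not_adj_of_closedNbr_inter_eq_pair {G : SimpleGraph V} {R : Set V} {p x y z : V}
    (hp : closedNbr G p ∩ R = {x, y}) (hz : z ∈ R) (hzx : z ≠ x) (hzy : z ≠ y) :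
    ¬ G.Adj p z := fun hpz => by
  have : z ∈ ({x, y} : Set V) := hp ▸ ⟨Or.inr hpz, hz⟩
  simp_all

theorem stmt9_general (G : SimpleGraph V) (h3 : CFree G 3)
    (h6 : CFree G 6) (R : Set V) (hR : MinRedundant G R) (x : V) (hx : x ∈ redVerts G R)
    (z1 z2 : V) (hz1 : z1 ∈ R ∩ sphere2 G x) (hz2 : z2 ∈ R ∩ sphere2 G x) (hne : z1 ≠ z2) :
    (G.neighborSet z1 ∩ G.neighborSet z2) \ G.neighborSet x = ∅ := by
  refine eq_empty_iff_forall_notMem.mpr fun w ⟨⟨hz1w, hz2w⟩, hxw⟩ => ?_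
  obtain ⟨p1, hxp1, hp1z1, hp1⟩ := hR.exists_adj_adj_of_mem_sphere2 hx hz1.1 hz1.2
  obtain ⟨p2, hxp2, hp2z2, hp2⟩ := hR.exists_adj_adj_of_mem_sphere2 hx hz2.1 hz2.2
  exact h6.false_of_hexagon hxp1 hp1z1 hz1w hz2w.symm hp2z2.symm hxp2.symm
    hz1.2.2.1 hxw hz2.2.2.1
    (h3.not_adj_of_adj_of_adj hp1z1 hz1w)
    (not_adj_of_closedNbr_inter_eq_pair hp1 hz2.1 hz2.2.1 hne.symm)
    (h3.not_adj_of_adj_of_adj hxp1.symm hxp2)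
    (h3.not_adj_of_adj_of_adj hz1w hz2w.symm)
    (fun h => not_adj_of_closedNbr_inter_eq_pair hp2 hz1.1 hz1.2.1 hne h.symm)
    (h3.not_adj_of_adj_of_adj hz2w.symm hp2z2.symm)

/-- in a `(C₃, C₅, C₆)`-free graph, two distinct vertices of `R ∩ N²(x)`
(for `x ∈ red(R)`, `R` a minimal redundant set) share no common neighbor outside `N(x)`. -/
theorem stmt9 [Fintype V] (G : SimpleGraph V) (h3 : CFree G 3) (h5 : CFree G 5)
    (h6 : CFree G 6) (R : Set V) (hR : MinRedundant G R) (x : V) (hx : x ∈ redVerts G R)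
    (z1 z2 : V) (hz1 : z1 ∈ R ∩ sphere2 G x) (hz2 : z2 ∈ R ∩ sphere2 G x) (hne : z1 ≠ z2) :
    (G.neighborSet z1 ∩ G.neighborSet z2) \ G.neighborSet x = ∅ :=
  stmt9_general G h3 h6 R hR x hx z1 z2 hz1 hz2 hne
end

section
/- Let G be a finite simple graph that is C_3-free, C_5-free and C_6-free, and let R be a minimal redundant set of G. Then R contains at most 3 redundant vertices, i.e., |red(R)| ≤ 3. -/
/-!
If `x` is a redundant vertex of a minimal redundant set `R` and `y ∈ R`, then `R \ {y}` is
irredundant, and the private neighbour `p` of `x` there must see `y`: `N[p] ∩ R = {x, y}`.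
For non-adjacent `x, y` this witness is a common neighbour. Three pairwise non-adjacent
redundant vertices together with their three witnesses form an induced `C₆`; a redundant
vertex non-adjacent to both ends of an edge of `R` forms an induced `C₅` with its two
witnesses. With triangle-freeness these rule out any edge among four redundant vertices,
so four of them would be pairwise non-adjacent, which is again impossible.
-/

open Set SimpleGraph

variable {V : Type*}

section Cycles

variable {G : SimpleGraph V}

/-- The hypothesis `hk` holds for `k = 3` and `k ≥ 5`; it makes an adjacency-reflecting map
injective. -/
lemma not_cFree_of_adj_iff {k : ℕ}
    (hk : ∀ i j : Fin k, (∀ l, (cycleGraph k).Adj l i → (cycleGraph k).Adj l j) → i = j)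
    (f : Fin k → V) (hf : ∀ i j, G.Adj (f i) (f j) ↔ (cycleGraph k).Adj i j) :
    ¬ CFree G k := fun h =>
  h.false ⟨⟨f, fun i j hij => hk i j fun l hl => (hf l j).1 (hij ▸ (hf l i).2 hl)⟩, hf _ _⟩

lemma CFree.not_adj_of_adj_of_adj_s12 (h3 : CFree G 3) {a b c : V}
    (hab : G.Adj a b) (hac : G.Adj a c) : ¬ G.Adj b c := fun hbc =>
  not_cFree_of_adj_iff (by decide) ![a, b, c]
    (by intro i j; fin_cases i <;> fin_cases j <;> simp +decide [G.adj_comm, *]) h3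

lemma CFree.false_of_pentagon (h5 : CFree G 5) {a b c d e : V}
    (hab : G.Adj a b) (hbc : G.Adj b c) (hcd : G.Adj c d) (hde : G.Adj d e) (hea : G.Adj e a)
    (hac : ¬ G.Adj a c) (had : ¬ G.Adj a d) (hbd : ¬ G.Adj b d)
    (hbe : ¬ G.Adj b e) (hce : ¬ G.Adj c e) : False :=
  not_cFree_of_adj_iff (by decide) ![a, b, c, d, e]
    (by intro i j; fin_cases i <;> fin_cases j <;> simp +decide [G.adj_comm, hea.symm, *]) h5

lemma CFree.false_of_hexagon_s12 (h6 : CFree G 6) {a b c d e f : V}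
    (hab : G.Adj a b) (hbc : G.Adj b c) (hcd : G.Adj c d) (hde : G.Adj d e)
    (hef : G.Adj e f) (hfa : G.Adj f a)
    (hac : ¬ G.Adj a c) (had : ¬ G.Adj a d) (hae : ¬ G.Adj a e)
    (hbd : ¬ G.Adj b d) (hbe : ¬ G.Adj b e) (hbf : ¬ G.Adj b f)
    (hce : ¬ G.Adj c e) (hcf : ¬ G.Adj c f) (hdf : ¬ G.Adj d f) : False :=
  not_cFree_of_adj_iff (by decide) ![a, b, c, d, e, f]
    (by intro i j; fin_cases i <;> fin_cases j <;> simp +decide [G.adj_comm, hfa.symm, *]) h6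

end Cycles

section MinRedundant

variable {G : SimpleGraph V} {R : Set V}

lemma not_adj_of_closedNbr_inter_eq_pair_s12 {p x y w : V}
    (hp : closedNbr G p ∩ R = {x, y}) (hw : w ∈ R) (hwx : w ≠ x) (hwy : w ≠ y) :
    ¬ G.Adj p w := fun hpw => by
  have : w ∈ closedNbr G p ∩ R := ⟨Or.inr hpw, hw⟩
  rw [hp] at this
  exact this.elim hwx hwy

theorem MinRedundant.exists_closedNbr_inter_eq_pair_s12 (hR : MinRedundant G R) {x y : V}
    (hx : x ∈ redVerts G R) (hy : y ∈ R) (hxy : x ≠ y) :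
    ∃ p ∈ closedNbr G x, closedNbr G p ∩ R = {x, y} := by
  have hirr : Irred G (R \ {y}) := not_not.1 (hR.2 _ (sdiff_singleton_ssubset.2 hy))
  obtain ⟨p, hpx, hp⟩ := hirr x ⟨hx.1, hxy⟩
  rw [← inter_sdiff_assoc] at hp
  have hyp : y ∈ closedNbr G p := by
    by_contra hyp
    have hpriv : p ∈ privSet G x R := ⟨hpx, by rwa [sdiff_singleton_eq_self (hyp ·.1)] at hp⟩
    simp [hx.2] at hpriv
  refine ⟨p, hpx, ?_⟩
  rw [← insert_eq_of_mem (s := closedNbr G p ∩ R) ⟨hyp, hy⟩, ← insert_sdiff_singleton, hp,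
    pair_comm]

theorem MinRedundant.exists_common_adj_closedNbr_inter_eq_pair (hR : MinRedundant G R)
    {x y : V} (hx : x ∈ redVerts G R) (hy : y ∈ R) (hxy : x ≠ y) (nxy : ¬ G.Adj x y) :
    ∃ p, G.Adj x p ∧ G.Adj y p ∧ closedNbr G p ∩ R = {x, y} := by
  obtain ⟨p, hpx, hp⟩ := hR.exists_closedNbr_inter_eq_pair_s12 hx hy hxy
  have hyp : y ∈ closedNbr G p := (hp.ge (Or.inr rfl)).1
  rcases hpx with rfl | hxp
  · rcases hyp with rfl | hpy
    · exact absurd rfl hxy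
    · exact absurd hpy nxy
  · rcases hyp with rfl | hpy
    · exact absurd hxp nxy
    · exact ⟨p, hxp, hpy.symm, hp⟩

theorem MinRedundant.closedNbr_inter_eq_pair_of_adj (hR : MinRedundant G R) (h3 : CFree G 3)
    {x y : V} (hx : x ∈ redVerts G R) (hy : y ∈ R) (hxy : G.Adj x y) :
    closedNbr G x ∩ R = {x, y} ∨ closedNbr G y ∩ R = {x, y} := by
  obtain ⟨p, hpx, hp⟩ := hR.exists_closedNbr_inter_eq_pair_s12 hx hy hxy.ne
  have hyp : y ∈ closedNbr G p := (hp.ge (Or.inr rfl)).1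
  rcases hpx with rfl | hxp
  · exact Or.inl hp
  · rcases hyp with rfl | hpy
    · exact Or.inr hp
    · exact absurd hpy.symm (h3.not_adj_of_adj_of_adj_s12 hxy hxp)

/-- The two witnesses of `x` close an induced pentagon through the edge `yz`. -/
theorem MinRedundant.adj_or_adj_of_adj (hR : MinRedundant G R) (h3 : CFree G 3)
    (h5 : CFree G 5) {x y z : V} (hx : x ∈ redVerts G R) (hy : y ∈ R) (hz : z ∈ R)
    (hyz : G.Adj y z) (hxy : x ≠ y) (hxz : x ≠ z) : G.Adj x y ∨ G.Adj x z := by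
  by_contra! ⟨nxy, nxz⟩
  obtain ⟨p, hxp, hyp, hp⟩ := hR.exists_common_adj_closedNbr_inter_eq_pair hx hy hxy nxy
  obtain ⟨q, hxq, hzq, hq⟩ := hR.exists_common_adj_closedNbr_inter_eq_pair hx hz hxz nxz
  exact h5.false_of_pentagon hxp.symm hxq hzq.symm hyz.symm hyp
    (h3.not_adj_of_adj_of_adj_s12 hxp hxq)
    (not_adj_of_closedNbr_inter_eq_pair_s12 hp hz hxz.symm hyz.ne') nxz nxy
    (not_adj_of_closedNbr_inter_eq_pair_s12 hq hy hxy.symm hyz.ne)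

/-- The three witnesses of the pairs interleave with `x, y, z` into an induced hexagon. -/
theorem MinRedundant.false_of_pairwise_not_adj (hR : MinRedundant G R) (h3 : CFree G 3)
    (h6 : CFree G 6) {x y z : V}
    (hx : x ∈ redVerts G R) (hy : y ∈ redVerts G R) (hz : z ∈ redVerts G R)
    (hxy : x ≠ y) (hxz : x ≠ z) (hyz : y ≠ z)
    (nxy : ¬ G.Adj x y) (nxz : ¬ G.Adj x z) (nyz : ¬ G.Adj y z) : False := by
  obtain ⟨p, hxp, hyp, hp⟩ := hR.exists_common_adj_closedNbr_inter_eq_pair hx hy.1 hxy nxy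
  obtain ⟨q, hxq, hzq, hq⟩ := hR.exists_common_adj_closedNbr_inter_eq_pair hx hz.1 hxz nxz
  obtain ⟨r, hyr, hzr, hr⟩ := hR.exists_common_adj_closedNbr_inter_eq_pair hy hz.1 hyz nyz
  exact h6.false_of_hexagon_s12 hyp hxp.symm hxq hzq.symm hzr hyr.symm
    (fun h => nxy h.symm)
    (fun h => not_adj_of_closedNbr_inter_eq_pair_s12 hq hy.1 hxy.symm hyz h.symm) nyz
    (h3.not_adj_of_adj_of_adj_s12 hxp hxq)
    (not_adj_of_closedNbr_inter_eq_pair_s12 hp hz.1 hxz.symm hyz.symm)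
    (h3.not_adj_of_adj_of_adj_s12 hyp hyr) nxz
    (fun h => not_adj_of_closedNbr_inter_eq_pair_s12 hr hx.1 hxy hxz h.symm)
    (h3.not_adj_of_adj_of_adj_s12 hzq hzr)

theorem MinRedundant.not_adj_of_adj_of_four (hR : MinRedundant G R) (h3 : CFree G 3)
    (h5 : CFree G 5) (h6 : CFree G 6) {x y z w : V}
    (hx : x ∈ redVerts G R) (hy : y ∈ redVerts G R) (hz : z ∈ redVerts G R)
    (hw : w ∈ redVerts G R) (hxw : x ≠ w) (hyz : y ≠ z) (hyw : y ≠ w) (hzw : z ≠ w)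
    (hxy : G.Adj x y) : ¬ G.Adj x z := fun hxz => by
  have hy_nbr : closedNbr G y ∩ R = {x, y} :=
    (hR.closedNbr_inter_eq_pair_of_adj h3 hx hy.1 hxy).resolve_left fun h =>
      not_adj_of_closedNbr_inter_eq_pair_s12 h hz.1 hxz.ne' hyz.symm hxz
  have nyw : ¬ G.Adj y w := not_adj_of_closedNbr_inter_eq_pair_s12 hy_nbr hw.1 hxw.symm hyw.symm
  have hwx : G.Adj w x :=
    (hR.adj_or_adj_of_adj h3 h5 hw hx.1 hy.1 hxy hxw.symm hyw.symm).resolve_right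
      fun h => nyw h.symm
  exact hR.false_of_pairwise_not_adj h3 h6 hy hz hw hyz hyw hzw
    (h3.not_adj_of_adj_of_adj_s12 hxy hxz) nyw (h3.not_adj_of_adj_of_adj_s12 hxz hwx.symm)

theorem MinRedundant.not_adj_of_four (hR : MinRedundant G R) (h3 : CFree G 3)
    (h5 : CFree G 5) (h6 : CFree G 6) {x y z w : V}
    (hx : x ∈ redVerts G R) (hy : y ∈ redVerts G R) (hz : z ∈ redVerts G R)
    (hw : w ∈ redVerts G R) (hxz : x ≠ z) (hxw : x ≠ w) (hyz : y ≠ z) (hyw : y ≠ w)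
    (hzw : z ≠ w) : ¬ G.Adj x y := fun hxy => by
  have nxz := hR.not_adj_of_adj_of_four h3 h5 h6 hx hy hz hw hxw hyz hyw hzw hxy
  have nyz := hR.not_adj_of_adj_of_four h3 h5 h6 hy hx hz hw hyw hxz hxw hzw hxy.symm
  rcases hR.adj_or_adj_of_adj h3 h5 hz hx.1 hy.1 hxy hxz.symm hyz.symm with h | h
  · exact nxz h.symm
  · exact nyz h.symm

end MinRedundant

theorem stmt12_general (G : SimpleGraph V) (h3 : CFree G 3) (h5 : CFree G 5)
    (h6 : CFree G 6) (R : Set V) (hR : MinRedundant G R) :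
    (redVerts G R).ncard ≤ 3 := by
  by_contra! h
  obtain ⟨a, b, c, d, ha, hb, hc, hd, hab, hac, had, hbc, hbd, hcd⟩ :=
    (three_lt_ncard_iff (finite_of_ncard_pos (by omega))).1 h
  exact hR.false_of_pairwise_not_adj h3 h6 ha hb hc hab hac hbc
    (hR.not_adj_of_four h3 h5 h6 ha hb hc hd hac had hbc hbd hcd)
    (hR.not_adj_of_four h3 h5 h6 ha hc hb hd hab had hbc.symm hcd hbd)
    (hR.not_adj_of_four h3 h5 h6 hb hc ha hd hab.symm hbd hac.symm hcd had)

/-- in a `(C₃, C₅, C₆)`-free graph, a minimal redundant set contains at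
most 3 redundant vertices. -/
theorem stmt12 [Fintype V] (G : SimpleGraph V) (h3 : CFree G 3) (h5 : CFree G 5)
    (h6 : CFree G 6) (R : Set V) (hR : MinRedundant G R) :
    (redVerts G R).ncard ≤ 3 :=
  stmt12_general G h3 h5 h6 R hR
end

section
/- Let G be a finite simple graph that is C_3-free, C_5-free and C_6-free. If R is a minimal redundant set of G containing exactly 3 redundant vertices (|red(R)| = 3), then |R| = 3. -/
open Set SimpleGraph

variable {V : Type*}

/-!
If `z ∈ R` and `t ∈ red(R)` are distinct, minimality makes `R \ {z}` irredundant, so `t` has a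
private neighbour `q` with respect to `R \ {z}` but none with respect to `R`; hence
`N[q] ∩ R = {z, t}`, and `z`, `t` are adjacent or linked through such a `q`. In a triangle-free
graph three pairwise linked vertices of `R` span at least two edges: otherwise the linking
vertices close an induced `C₅` or `C₆`. If `R` had a vertex `x` besides its three redundant
vertices, `x` would be adjacent to a redundant `t`, and triangle-freeness forces `x` or `t` to have
no other neighbour in `R`; that vertex spans at most one edge with the two other redundant ones.
-/

lemma mem_closedNbr_iff {G : SimpleGraph V} {u v : V} :
    u ∈ closedNbr G v ↔ u = v ∨ G.Adj v u := by
  simp [closedNbr]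

section InducedCycles

variable {G : SimpleGraph V}

lemma CFree.false_of_triangle (h : CFree G 3) {a b c : V}
    (hab : G.Adj a b) (hbc : G.Adj b c) (hca : G.Adj c a) : False := by
  have := hab.ne; have := hbc.ne; have := hca.ne
  refine h.false ⟨⟨![a, b, c], ?_⟩, ?_⟩
  · intro i j hij
    fin_cases i <;> fin_cases j <;> simp_all [eq_comm]
  · intro i j
    change G.Adj (![a, b, c] i) (![a, b, c] j) ↔ _
    fin_cases i <;> fin_cases j <;> simp +decide [*, hca.symm, G.adj_comm]

lemma CFree.false_of_cycle5 (h : CFree G 5) {a b c d e : V}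
    (hab : G.Adj a b) (hbc : G.Adj b c) (hcd : G.Adj c d) (hde : G.Adj d e) (hea : G.Adj e a)
    (hac : ¬G.Adj a c) (had : ¬G.Adj a d) (hbd : ¬G.Adj b d) (hbe : ¬G.Adj b e)
    (hce : ¬G.Adj c e)
    (nac : a ≠ c) (nad : a ≠ d) (nbd : b ≠ d) (nbe : b ≠ e) (nce : c ≠ e) : False := by
  have := hab.ne; have := hbc.ne; have := hcd.ne; have := hde.ne; have := hea.ne
  refine h.false ⟨⟨![a, b, c, d, e], ?_⟩, ?_⟩
  · intro i j hij
    fin_cases i <;> fin_cases j <;> simp_all [eq_comm]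
  · intro i j
    change G.Adj (![a, b, c, d, e] i) (![a, b, c, d, e] j) ↔ _
    fin_cases i <;> fin_cases j <;> simp +decide [*, hea.symm, G.adj_comm]

lemma CFree.false_of_cycle6 (h : CFree G 6) {a b c d e f : V}
    (hab : G.Adj a b) (hbc : G.Adj b c) (hcd : G.Adj c d) (hde : G.Adj d e) (hef : G.Adj e f)
    (hfa : G.Adj f a)
    (hac : ¬G.Adj a c) (had : ¬G.Adj a d) (hae : ¬G.Adj a e) (hbd : ¬G.Adj b d)
    (hbe : ¬G.Adj b e) (hbf : ¬G.Adj b f) (hce : ¬G.Adj c e) (hcf : ¬G.Adj c f)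
    (hdf : ¬G.Adj d f)
    (nac : a ≠ c) (nad : a ≠ d) (nae : a ≠ e) (nbd : b ≠ d) (nbe : b ≠ e) (nbf : b ≠ f)
    (nce : c ≠ e) (ncf : c ≠ f) (ndf : d ≠ f) : False := by
  have := hab.ne; have := hbc.ne; have := hcd.ne; have := hde.ne; have := hef.ne; have := hfa.ne
  refine h.false ⟨⟨![a, b, c, d, e, f], ?_⟩, ?_⟩
  · intro i j hij
    fin_cases i <;> fin_cases j <;> simp_all [eq_comm]
  · intro i j
    change G.Adj (![a, b, c, d, e, f] i) (![a, b, c, d, e, f] j) ↔ _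
    fin_cases i <;> fin_cases j <;> simp +decide [*, hfa.symm, G.adj_comm]

end InducedCycles

def Linked (G : SimpleGraph V) (R : Set V) (u v : V) : Prop :=
  G.Adj u v ∨ ∃ m, G.Adj u m ∧ G.Adj m v ∧ closedNbr G m ∩ R = {u, v}

section Linked

variable {G : SimpleGraph V} {R : Set V}

lemma ne_and_not_adj_of_closedNbr_inter_eq_pair {m u v w : V}
    (hm : closedNbr G m ∩ R = {u, v}) (hw : w ∈ R) (hwu : w ≠ u) (hwv : w ≠ v) :
    m ≠ w ∧ ¬G.Adj m w := by
  have hwm : w ∉ closedNbr G m ∩ R := by simp [hm, hwu, hwv]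
  simp only [Set.mem_inter_iff, mem_closedNbr_iff, hw, and_true, not_or] at hwm
  exact ⟨Ne.symm hwm.1, hwm.2⟩

lemma adj_or_adj_of_linked (h3 : CFree G 3) (h5 : CFree G 5) (h6 : CFree G 6) {u v w : V}
    (hu : u ∈ R) (hv : v ∈ R) (hw : w ∈ R) (huv : u ≠ v) (huw : u ≠ w) (hvw : v ≠ w)
    (luv : Linked G R u v) (luw : Linked G R u w) (lvw : Linked G R v w) :
    G.Adj u v ∨ G.Adj u w := by
  by_contra! ⟨auv, auw⟩
  obtain ⟨m, hum, hmv, hm⟩ := luv.resolve_left auv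
  obtain ⟨n, hun, hnw, hn⟩ := luw.resolve_left auw
  obtain ⟨nmw, hmw⟩ := ne_and_not_adj_of_closedNbr_inter_eq_pair hm hw huw.symm hvw.symm
  obtain ⟨nnv, hnv⟩ := ne_and_not_adj_of_closedNbr_inter_eq_pair hn hv huv.symm hvw
  have nmn : m ≠ n := fun h => hnv (h ▸ hmv)
  have hmn : ¬G.Adj m n := fun h => h3.false_of_triangle hum h hun.symm
  by_cases avw : G.Adj v w
  · exact h5.false_of_cycle5 hum hmv avw hnw.symm hun.symm auv auw hmw hmn
      (fun h => hnv h.symm) huv huw nmw nmn nnv.symm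
  obtain ⟨k, hvk, hkw, hk⟩ := lvw.resolve_left avw
  obtain ⟨nku, hku⟩ := ne_and_not_adj_of_closedNbr_inter_eq_pair hk hu huv huw
  exact h6.false_of_cycle6 hum hmv hvk hkw hnw.symm hun.symm
    auv (fun h => hku h.symm) auw (fun h => h3.false_of_triangle hmv hvk h.symm)
    hmw hmn avw (fun h => hnv h.symm) (fun h => h3.false_of_triangle hkw hnw.symm h.symm)
    huv nku.symm huw (fun h => hku (h ▸ hum.symm)) nmw nmn hvw nnv.symm
    (fun h => hnv (h ▸ hvk.symm))

end Linked

namespace MinRedundant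

variable {G : SimpleGraph V} {R : Set V}

lemma exists_closedNbr_inter_eq_pair_s14 (hR : MinRedundant G R) {z t : V} (hz : z ∈ R)
    (ht : t ∈ redVerts G R) (hzt : z ≠ t) :
    ∃ q ∈ closedNbr G t, closedNbr G q ∩ R = {z, t} := by
  have hirr : Irred G (R \ {z}) := not_not.mp (hR.2 _ (Set.sdiff_singleton_ssubset.mpr hz))
  obtain ⟨q, hqt, hq⟩ := hirr t ⟨ht.1, hzt.symm⟩
  simp only [Set.ext_iff, Set.mem_inter_iff, Set.mem_sdiff, Set.mem_singleton_iff] at hq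
  have hzq : z ∈ closedNbr G q := by
    by_contra hzq
    have hqpriv : q ∈ privSet G t R := by
      refine ⟨hqt, Set.ext fun a => ?_⟩
      have := hq a
      by_cases haz : a = z <;> simp_all
    simp [ht.2] at hqpriv
  refine ⟨q, hqt, Set.ext fun a => ?_⟩
  have := hq a
  by_cases haz : a = z <;> simp_all

lemma linked (hR : MinRedundant G R) {z t : V} (hz : z ∈ R) (ht : t ∈ redVerts G R)
    (hzt : z ≠ t) : Linked G R z t := by
  obtain ⟨q, hqt, hq⟩ := hR.exists_closedNbr_inter_eq_pair_s14 hz ht hzt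
  have hzq : z ∈ closedNbr G q := (hq.symm ▸ Set.mem_insert z {t} : z ∈ closedNbr G q ∩ R).1
  by_cases azt : G.Adj z t
  · exact Or.inl azt
  rcases mem_closedNbr_iff.mp hqt, mem_closedNbr_iff.mp hzq with ⟨rfl | atq, rfl | aqz⟩
  · exact absurd rfl hzt
  · exact absurd aqz.symm azt
  · exact absurd atq.symm azt
  · exact Or.inr ⟨q, aqz.symm, atq.symm, hq⟩

lemma closedNbr_inter_eq_pair_of_adj_s14 (hR : MinRedundant G R) (h3 : CFree G 3) {z t : V}
    (hz : z ∈ R) (ht : t ∈ redVerts G R) (hzt : G.Adj z t) :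
    closedNbr G z ∩ R = {z, t} ∨ closedNbr G t ∩ R = {t, z} := by
  obtain ⟨q, hqt, hq⟩ := hR.exists_closedNbr_inter_eq_pair_s14 hz ht hzt.ne
  have hzq : z ∈ closedNbr G q := (hq.symm ▸ Set.mem_insert z {t} : z ∈ closedNbr G q ∩ R).1
  rcases mem_closedNbr_iff.mp hqt, mem_closedNbr_iff.mp hzq with ⟨rfl | atq, rfl | aqz⟩
  · exact absurd rfl hzt.ne
  · exact Or.inr (by rw [hq, Set.pair_comm])
  · exact Or.inl hq
  · exact (h3.false_of_triangle hzt atq aqz).elim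

lemma false_of_closedNbr_inter_eq_pair (hR : MinRedundant G R) (h3 : CFree G 3)
    (h5 : CFree G 5) (h6 : CFree G 6) {u v a b : V} (hu : u ∈ R)
    (hN : closedNbr G u ∩ R = {u, v}) (ha : a ∈ redVerts G R) (hb : b ∈ redVerts G R)
    (hau : a ≠ u) (hav : a ≠ v) (hbu : b ≠ u) (hbv : b ≠ v) (hab : a ≠ b) : False := by
  have hua := (ne_and_not_adj_of_closedNbr_inter_eq_pair hN ha.1 hau hav).2
  have hub := (ne_and_not_adj_of_closedNbr_inter_eq_pair hN hb.1 hbu hbv).2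
  rcases adj_or_adj_of_linked h3 h5 h6 hu ha.1 hb.1 hau.symm hbu.symm hab
    (hR.linked hu ha hau.symm) (hR.linked hu hb hbu.symm) (hR.linked ha.1 hb hab) with h | h
  exacts [hua h, hub h]

lemma false_of_adj (hR : MinRedundant G R) (h3 : CFree G 3) (h5 : CFree G 5)
    (h6 : CFree G 6) {z t a b : V} (hz : z ∈ R) (ht : t ∈ redVerts G R)
    (ha : a ∈ redVerts G R) (hb : b ∈ redVerts G R) (hzt : G.Adj z t)
    (haz : a ≠ z) (hat : a ≠ t) (hbz : b ≠ z) (hbt : b ≠ t) (hab : a ≠ b) : False := by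
  rcases hR.closedNbr_inter_eq_pair_of_adj_s14 h3 hz ht hzt with hN | hN
  · exact hR.false_of_closedNbr_inter_eq_pair h3 h5 h6 hz hN ha hb haz hat hbz hbt hab
  · exact hR.false_of_closedNbr_inter_eq_pair h3 h5 h6 ht.1 hN ha hb hat haz hbt hbz hab

end MinRedundant

theorem stmt14_general (G : SimpleGraph V) (h3 : CFree G 3) (h5 : CFree G 5)
    (h6 : CFree G 6) (R : Set V) (hR : MinRedundant G R)
    (hred : (redVerts G R).ncard = 3) :
    R.ncard = 3 := by
  obtain ⟨y₁, y₂, y₃, h₁₂, h₁₃, h₂₃, hY⟩ := Set.ncard_eq_three.mp hred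
  by_contra hR3
  obtain ⟨x, hx, hxY⟩ : ∃ x ∈ R, x ∉ redVerts G R := by
    by_contra! hRY
    exact hR3 (by rw [Set.Subset.antisymm hRY fun _ hy => hy.1, hred])
  have hy₁ : y₁ ∈ redVerts G R := by simp [hY]
  have hy₂ : y₂ ∈ redVerts G R := by simp [hY]
  have hy₃ : y₃ ∈ redVerts G R := by simp [hY]
  have hx₁ : y₁ ≠ x := fun h => hxY (h ▸ hy₁)
  have hx₂ : y₂ ≠ x := fun h => hxY (h ▸ hy₂)
  have hx₃ : y₃ ≠ x := fun h => hxY (h ▸ hy₃)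
  rcases adj_or_adj_of_linked h3 h5 h6 hx hy₁.1 hy₂.1 hx₁.symm hx₂.symm h₁₂
    (hR.linked hx hy₁ hx₁.symm) (hR.linked hx hy₂ hx₂.symm) (hR.linked hy₁.1 hy₂ h₁₂) with h | h
  · exact hR.false_of_adj h3 h5 h6 hx hy₁ hy₂ hy₃ h hx₂ h₁₂.symm hx₃ h₁₃.symm h₂₃
  · exact hR.false_of_adj h3 h5 h6 hx hy₂ hy₁ hy₃ h hx₁ h₁₂ hx₃ h₂₃.symm h₁₃

/-- in a `(C₃, C₅, C₆)`-free graph, a minimal redundant set with exactly 3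
redundant vertices has exactly 3 elements. -/
theorem stmt14 [Fintype V] (G : SimpleGraph V) (h3 : CFree G 3) (h5 : CFree G 5)
    (h6 : CFree G 6) (R : Set V) (hR : MinRedundant G R)
    (hred : (redVerts G R).ncard = 3) :
    R.ncard = 3 :=
  stmt14_general G h3 h5 h6 R hR hred
end
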